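/- Characterization of deterministic Spark aggregation: for (⊗) : a → b → b, (⊕) : b → b → b, and z : b, the following are equivalent: (1) for every xss : List (List a), every element of aggregate z (⊗) (⊕) xss equals List.foldr (⊗) z xss.join; (2) (⊕) restricted to the image of List.foldr (⊗) z is associative and commutative with identity z, and List.foldr (⊗) z (xs ++ ys) = List.foldr (⊗) z xs ⊕ List.foldr (⊗) z ys for all xs ys. -/

import Mathlib

def ins {a : Type*} (x : a) : List a → List (List a)
  | [] => [[x]]
  | y :: xs => (x :: y :: xs) :: (ins x xs).map (y :: ·)

def perm {a : Type*} : List a → List (List a)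
  | [] => [[]]
  | x :: xs => (perm xs).flatMap (ins x)

def aggregate {a b : Type*} (z : b) (ot : a → b → b) (op : b → b → b)
    (xss : List (List a)) : List b :=
  (perm (xss.map (List.foldr ot z))).map (List.foldr op z)

lemma ins_perm {a : Type*} (x : a) : ∀ (t cs : List a), cs ∈ ins x t → cs.Perm (x :: t)
  | [], cs, h => by simp [ins] at h; simp [h]
  | y :: t, cs, h => by
    simp only [ins, List.mem_cons, List.mem_map] at h
    rcases h with rfl | ⟨ds, hds, rfl⟩
    · exact List.Perm.refl _
    · exact ((ins_perm x t ds hds).cons y).trans (List.Perm.swap _ _ _)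

lemma perm_perm {a : Type*} : ∀ (t cs : List a), cs ∈ perm t → cs.Perm t
  | [], cs, h => by simp [perm] at h; simp [h]
  | x :: t, cs, h => by
    simp only [perm, List.mem_flatMap] at h
    rcases h with ⟨ds, hds, hcs⟩
    exact (ins_perm x ds cs hcs).trans ((perm_perm t ds hds).cons x)

theorem aggregate_det_iff {a b : Type*} (z : b) (ot : a → b → b) (op : b → b → b) :
    (∀ (xss : List (List a)) (r : b), r ∈ aggregate z ot op xss →
      r = List.foldr ot z xss.flatten) ↔
    ((∀ y : b, (∃ us, List.foldr ot z us = y) → op y z = y ∧ op z y = y) ∧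
     (∀ x y : b, (∃ us, List.foldr ot z us = x) → (∃ us, List.foldr ot z us = y) →
        op x y = op y x) ∧
     (∀ x y w : b, (∃ us, List.foldr ot z us = x) → (∃ us, List.foldr ot z us = y) →
        (∃ us, List.foldr ot z us = w) → op (op x y) w = op x (op y w)) ∧
     (∀ xs ys : List a,
        List.foldr ot z (xs ++ ys) = op (List.foldr ot z xs) (List.foldr ot z ys))) := by
  set f : List a → b := List.foldr ot z with hf
  set S : b → Prop := fun y => ∃ us, f us = y with hS
  constructor
  · intro h
    -- right identity
    have hid_r : ∀ y, S y → op y z = y := by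
      rintro y ⟨us, rfl⟩
      have := h [us] (op (f us) z) (by simp [aggregate, perm, ins, hf])
      simpa using this
    -- hom
    have hhom : ∀ xs ys : List a, f (xs ++ ys) = op (f xs) (f ys) := by
      intro xs ys
      have := h [xs, ys] (op (f xs) (op (f ys) z)) (by simp [aggregate, perm, ins, hf])
      rw [hid_r (f ys) ⟨ys, rfl⟩] at this
      simpa using this.symm
    -- left identity
    have hid_l : ∀ y, S y → op z y = y := by
      rintro y ⟨us, rfl⟩
      have := h [[], us] (op z (op (f us) z)) (by simp [aggregate, perm, ins, hf])
      rw [hid_r (f us) ⟨us, rfl⟩] at this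
      simpa using this
    refine ⟨fun y hy => ⟨hid_r y hy, hid_l y hy⟩, ?_, ?_, fun xs ys => hhom xs ys⟩
    · rintro x y ⟨us, rfl⟩ ⟨vs, rfl⟩
      have h1 := h [us, vs] (op (f vs) (op (f us) z)) (by simp [aggregate, perm, ins, hf])
      rw [hid_r (f us) ⟨us, rfl⟩] at h1
      simp only [List.flatten, List.append_eq, List.append_nil] at h1
      rw [hhom us vs] at h1
      exact h1.symm
    · rintro x y w ⟨us, rfl⟩ ⟨vs, rfl⟩ ⟨ws, rfl⟩
      rw [← hhom, ← hhom, ← hhom, ← hhom, List.append_assoc]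
  · rintro ⟨hid, hcomm, hassoc, hhom⟩
    have hSz : S z := ⟨[], rfl⟩
    have hSop : ∀ x y, S x → S y → S (op x y) := by
      rintro x y ⟨us, rfl⟩ ⟨vs, rfl⟩
      exact ⟨us ++ vs, (hhom us vs)⟩
    have hfold_S : ∀ bs : List b, (∀ x ∈ bs, S x) → S (List.foldr op z bs) := by
      intro bs
      induction bs with
      | nil => intro _; exact hSz
      | cons x bs ih =>
        intro hb
        exact hSop _ _ (hb x (by simp)) (ih fun y hy => hb y (by simp [hy]))
    have hins : ∀ (x : b) (bs : List b), S x → (∀ y ∈ bs, S y) →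
        ∀ cs ∈ ins x bs, List.foldr op z cs = op x (List.foldr op z bs) := by
      intro x bs hx
      induction bs with
      | nil => intro _ cs hcs; simp [ins] at hcs; simp [hcs]
      | cons y bs ih =>
        intro hb cs hcs
        simp only [ins, List.mem_cons, List.mem_map] at hcs
        rcases hcs with rfl | ⟨ds, hds, rfl⟩
        · simp
        · have hbs : ∀ w ∈ bs, S w := fun w hw => hb w (by simp [hw])
          have hy : S y := hb y (by simp)
          have ht : S (List.foldr op z bs) := hfold_S bs hbs
          simp only [List.foldr_cons, ih hbs ds hds]
          rw [← hassoc y x _ hy hx ht, hcomm y x hy hx, hassoc x y _ hx hy ht]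
    have hperm : ∀ (bs : List b), (∀ y ∈ bs, S y) →
        ∀ cs ∈ perm bs, List.foldr op z cs = List.foldr op z bs := by
      intro bs
      induction bs with
      | nil => intro _ cs hcs; simp [perm] at hcs; simp [hcs]
      | cons x bs ih =>
        intro hb cs hcs
        simp only [perm, List.mem_flatMap] at hcs
        rcases hcs with ⟨ds, hds, hcs⟩
        have hbs : ∀ w ∈ bs, S w := fun w hw => hb w (by simp [hw])
        have hds' : ∀ w ∈ ds, S w := fun w hw => hbs w ((perm_perm bs ds hds).mem_iff.mp hw)
        rw [hins x ds (hb x (by simp)) hds' cs hcs, ih hbs ds hds]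
        rfl
    intro xss r hr
    simp only [aggregate, List.mem_map] at hr
    rcases hr with ⟨cs, hcs, rfl⟩
    have hmem : ∀ y ∈ xss.map f, S y := by
      intro y hy
      rcases List.mem_map.mp hy with ⟨us, _, rfl⟩
      exact ⟨us, rfl⟩
    rw [hperm _ hmem cs hcs]
    clear hcs hmem cs
    induction xss with
    | nil => rfl
    | cons xs xss ih => simp [hhom, ih]
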